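/- arXiv:2309.01577 — 2 statements merged into one kernel-verified Lean document; each statement's English description precedes it below -/
import Mathlib

section
/- Let n ≥ 1 and let W be a finite group of n×n complex orthogonal matrices (AᵀA = I) acting on ℂ[x₁,…,xₙ] by linear substitution of variables. Suppose the algebra ℂ[x₁,…,xₙ]^W of W-invariant polynomials is generated as a ℂ-algebra by homogeneous W-invariant polynomials y₁,…,yₙ of degrees d₁ ≥ d₂ ≥ … ≥ d_{n−1} > dₙ = 2. Then there exist homogeneous W-invariant polynomials Y₁,…,Yₙ with deg Yⱼ = dⱼ which also generate ℂ[x₁,…,xₙ]^W as a ℂ-algebra, such that Δ(Yₙ) = 1 and Δ(Yⱼ) = 0 for every j = 1,…,n−1. -/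
/-!
Write `q = ∑ xᵢ²`. Since `Δ(q s) = (2n + 4e) s + q Δs` for `s` homogeneous of degree `e`, the
equation `Δ(q s) + μ s = g` can be solved degree by degree, so every homogeneous `p` of degree
`m + 2` splits as `p = h + q r` with `Δh = 0`, where `h` and `r` lie in every subalgebra that
contains `p` and `q` and is stable under `Δ`. Orthogonal substitutions fix `q` and commute with
`Δ`, so the invariant algebra is such a subalgebra.

As every other `dⱼ` exceeds `2`, the invariants of degree `2` are the multiples of `yₙ`; in
particular `q` is a nonzero multiple of `yₙ`. Take
`Yₙ = q / 2n` and `Yⱼ` the harmonic part of `yⱼ`. Then `yⱼ = Yⱼ + q rⱼ` with `rⱼ` an invariant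
of degree `dⱼ - 2`, hence a polynomial in generators of degree `< dⱼ`, and induction on the
degree puts every `yⱼ` in the algebra generated by the `Yⱼ`.
-/

open MvPolynomial Matrix

noncomputable section

/-- Action of an `n × n` complex matrix on `ℂ[x₁, …, xₙ]` by the linear substitution
of variables `xᵢ ↦ ∑ⱼ Aᵢⱼ xⱼ`. -/
def matAct {n : ℕ} (A : Matrix (Fin n) (Fin n) ℂ) (p : MvPolynomial (Fin n) ℂ) :
    MvPolynomial (Fin n) ℂ :=
  aeval (fun i => ∑ j, C (A i j) * X j) p

/-- The Laplace operator `Δp = ∑ₐ ∂²p/∂xₐ²`. -/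
def lap {n : ℕ} (p : MvPolynomial (Fin n) ℂ) : MvPolynomial (Fin n) ℂ :=
  ∑ a, pderiv a (pderiv a p)

theorem MvPolynomial.pderiv_aeval {σ τ R : Type*} [CommSemiring R] [Fintype σ]
    (g : σ → MvPolynomial τ R) (a : τ) (p : MvPolynomial σ R) :
    pderiv a (aeval g p) = ∑ b, pderiv a (g b) * aeval g (pderiv b p) := by
  classical
  induction p using MvPolynomial.induction_on with
  | C c => simp
  | add p q hp hq => rw [map_add, map_add, hp, hq, ← Finset.sum_add_distrib]; simp [mul_add]
  | mul_X p i hp =>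
    simp only [map_mul, aeval_X, pderiv_mul, hp, map_add, pderiv_X, mul_add, Finset.sum_add_distrib,
      Finset.sum_mul]
    congr 1
    · exact Finset.sum_congr rfl fun b _ => by ring
    · simp [Pi.single_apply, mul_comm]

section Laplacian

variable {n : ℕ}

lemma lap_sub (p q : MvPolynomial (Fin n) ℂ) : lap (p - q) = lap p - lap q := by
  simp [lap, Finset.sum_sub_distrib]

lemma lap_smul (c : ℂ) (p : MvPolynomial (Fin n) ℂ) : lap (c • p) = c • lap p := by
  simp [lap, Finset.smul_sum]

lemma lap_mul (f g : MvPolynomial (Fin n) ℂ) :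
    lap (f * g) = lap f * g + 2 * ∑ a, pderiv a f * pderiv a g + f * lap g := by
  simp only [lap, pderiv_mul, map_add, Finset.mul_sum, Finset.sum_mul, ← Finset.sum_add_distrib]
  exact Finset.sum_congr rfl fun a _ => by ring

lemma lap_matAct (A : Matrix (Fin n) (Fin n) ℂ) (hA : A * Aᵀ = 1)
    (p : MvPolynomial (Fin n) ℂ) : lap (matAct A p) = matAct A (lap p) := by
  classical
  have hrow : ∀ b a, pderiv a (∑ j, C (A b j) * X j : MvPolynomial (Fin n) ℂ) = C (A b a) := by
    simp [pderiv_X, Pi.single_apply]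
  have horth : ∀ b c, ∑ a, C (A b a) * C (A c a) =
      (if b = c then 1 else 0 : MvPolynomial (Fin n) ℂ) := by
    intro b c
    simp only [← C_mul, ← map_sum]
    rw [show ∑ a, A b a * A c a = (A * Aᵀ) b c by simp [Matrix.mul_apply], hA, one_apply]
    split_ifs <;> simp
  calc lap (matAct A p)
      = ∑ a, ∑ b, ∑ c, C (A b a) * C (A c a) * matAct A (pderiv c (pderiv b p)) := by
        simp only [lap, matAct, pderiv_aeval, hrow, map_sum, pderiv_C_mul, Finset.mul_sum,
          mul_assoc]
    _ = ∑ b, ∑ c, (∑ a, C (A b a) * C (A c a)) * matAct A (pderiv c (pderiv b p)) := by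
        simp only [Finset.sum_mul]
        rw [Finset.sum_comm]
        exact Finset.sum_congr rfl fun b _ => Finset.sum_comm
    _ = matAct A (lap p) := by
        simp [horth, lap, matAct]

end Laplacian

section SumSq

variable {n : ℕ}

def sumSq (n : ℕ) : MvPolynomial (Fin n) ℂ := ∑ i, X i ^ 2

lemma isHomogeneous_sumSq : (sumSq n).IsHomogeneous 2 :=
  IsHomogeneous.sum _ _ _ fun i _ => isHomogeneous_X_pow i 2

lemma sumSq_ne_zero (hn : n ≠ 0) : sumSq n ≠ 0 := by
  intro h
  simpa [sumSq, hn] using congrArg (eval fun _ => (1 : ℂ)) h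

lemma pderiv_sumSq (a : Fin n) : pderiv a (sumSq n) = 2 * X a := by
  classical
  simp [sumSq, pderiv_X, Pi.single_apply, mul_comm]

lemma matAct_sumSq (A : Matrix (Fin n) (Fin n) ℂ) (hA : Aᵀ * A = 1) :
    matAct A (sumSq n) = sumSq n := by
  set M : Matrix (Fin n) (Fin n) (MvPolynomial (Fin n) ℂ) := A.map C
  have hM : Mᵀ * M = 1 := by
    rw [← transpose_map, ← Matrix.map_mul, hA, Matrix.map_one _ (map_zero C) (map_one C)]
  have hsumSq : sumSq n = X ⬝ᵥ X := by simp [sumSq, dotProduct, sq]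
  calc matAct A (sumSq n) = (M *ᵥ X) ⬝ᵥ (M *ᵥ X) := by
        simp [matAct, sumSq, dotProduct, mulVec, M, sq]
    _ = sumSq n := by
        rw [dotProduct_comm, dotProduct_mulVec, ← mulVec_transpose, mulVec_mulVec, hM,
          one_mulVec, hsumSq]

lemma lap_sumSq : lap (sumSq n) = C (2 * n : ℂ) := by
  simp [lap, pderiv_sumSq, ← map_ofNat C, mul_comm]

lemma lap_sumSq_mul {r : MvPolynomial (Fin n) ℂ} {m : ℕ} (hr : r.IsHomogeneous m) :
    lap (sumSq n * r) = (2 * n + 4 * m : ℂ) • r + sumSq n * lap r := by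
  rw [lap_mul, lap_sumSq]
  simp only [pderiv_sumSq, mul_assoc, ← Finset.mul_sum, hr.sum_X_mul_pderiv]
  rw [add_smul, smul_eq_C_mul, smul_eq_C_mul, nsmul_eq_mul]
  simp only [map_mul, map_natCast, map_ofNat]
  ring

end SumSq

section Invariants

variable {n : ℕ}

def invariants (W : Set (Matrix (Fin n) (Fin n) ℂ)) : Subalgebra ℂ (MvPolynomial (Fin n) ℂ) :=
  ⨅ A ∈ W, AlgHom.equalizer (aeval fun i => ∑ j, C (A i j) * X j) (AlgHom.id ℂ _)

variable {W : Set (Matrix (Fin n) (Fin n) ℂ)}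

lemma mem_invariants {p : MvPolynomial (Fin n) ℂ} :
    p ∈ invariants W ↔ ∀ A ∈ W, matAct A p = p := by
  simp [invariants, Algebra.mem_iInf, AlgHom.mem_equalizer, matAct]

lemma sumSq_mem_invariants (horth : ∀ A ∈ W, Aᵀ * A = 1) : sumSq n ∈ invariants W :=
  mem_invariants.2 fun A hA => matAct_sumSq A (horth A hA)

lemma lap_mem_invariants (horth : ∀ A ∈ W, Aᵀ * A = 1) {p : MvPolynomial (Fin n) ℂ}
    (hp : p ∈ invariants W) : lap p ∈ invariants W :=
  mem_invariants.2 fun A hA => by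
    rw [← lap_matAct A (mul_eq_one_comm.1 (horth A hA)), mem_invariants.1 hp A hA]

end Invariants

section Harmonic

variable {n : ℕ}

lemma MvPolynomial.IsHomogeneous.lap {p : MvPolynomial (Fin n) ℂ} {m : ℕ}
    (hp : p.IsHomogeneous m) : (lap p).IsHomogeneous (m - 2) :=
  IsHomogeneous.sum _ _ _ fun a _ => by
    simpa [Nat.sub_sub] using (hp.pderiv (i := a)).pderiv (i := a)

lemma lap_eq_zero_of_isHomogeneous_of_lt_two {p : MvPolynomial (Fin n) ℂ} {m : ℕ}
    (hp : p.IsHomogeneous m) (hm : m < 2) : lap p = 0 := by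
  refine Finset.sum_eq_zero fun a _ => ?_
  have h0 : (pderiv a p).IsHomogeneous 0 := by simpa [show m - 1 = 0 by omega] using hp.pderiv
  rw [← totalDegree_zero_iff_isHomogeneous, totalDegree_eq_zero_iff_eq_C] at h0
  rw [h0, pderiv_C]

variable {S : Subalgebra ℂ (MvPolynomial (Fin n) ℂ)}

theorem exists_lap_sumSq_mul_add_smul_eq (hn : n ≠ 0) (hS : sumSq n ∈ S)
    (hlapS : ∀ p ∈ S, lap p ∈ S) (μ : ℕ) {g : MvPolynomial (Fin n) ℂ} {e : ℕ}
    (hg : g.IsHomogeneous e) (hgS : g ∈ S) :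
    ∃ s ∈ S, s.IsHomogeneous e ∧ lap (sumSq n * s) + (μ : ℂ) • s = g := by
  induction e using Nat.strong_induction_on generalizing μ g with
  | _ e ih =>
  set ν : ℕ := 2 * n + 4 * e + μ with hν_def
  have hν : (ν : ℂ) ≠ 0 := Nat.cast_ne_zero.2 (by omega)
  obtain ⟨t, htS, hqt, ht⟩ : ∃ t ∈ S, (sumSq n * t).IsHomogeneous e ∧
      lap (sumSq n * t) + (ν : ℂ) • t = lap g := by
    rcases lt_or_ge e 2 with he | he
    · refine ⟨0, S.zero_mem, by simpa using isHomogeneous_zero _ _ e, ?_⟩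
      rw [lap_eq_zero_of_isHomogeneous_of_lt_two hg he]
      simp [lap]
    · obtain ⟨t, htS, ht, hlap⟩ := ih (e - 2) (by omega) ν hg.lap (hlapS g hgS)
      refine ⟨t, htS, ?_, hlap⟩
      simpa [show 2 + (e - 2) = e by omega] using isHomogeneous_sumSq.mul ht
  -- `t` solves the same equation in degree `e - 2` with `μ` replaced by `ν`; this makes `Δ s = t`.
  set s := (ν : ℂ)⁻¹ • (g - sumSq n * t) with hs_def
  have hs : s.IsHomogeneous e := by
    rw [hs_def, smul_eq_C_mul]
    exact (hg.sub hqt).C_mul _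
  have hlaps : lap s = t := by
    rw [lap_smul, lap_sub, ← ht, add_sub_cancel_left, smul_smul, inv_mul_cancel₀ hν, one_smul]
  refine ⟨s, S.smul_mem (S.sub_mem hgS (S.mul_mem hS htS)) _, hs, ?_⟩
  rw [lap_sumSq_mul hs, hlaps, add_right_comm, ← add_smul]
  rw [show (2 * n + 4 * e + μ : ℂ) = ν by push_cast [hν_def]; ring, hs_def, smul_smul,
    mul_inv_cancel₀ hν, one_smul, sub_add_cancel]

theorem exists_harmonic_decomposition (hn : n ≠ 0) (hS : sumSq n ∈ S)
    (hlapS : ∀ p ∈ S, lap p ∈ S) {p : MvPolynomial (Fin n) ℂ} {m : ℕ}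
    (hp : p.IsHomogeneous (m + 2)) (hpS : p ∈ S) :
    ∃ h ∈ S, ∃ r ∈ S, p = h + sumSq n * r ∧ lap h = 0 ∧
      h.IsHomogeneous (m + 2) ∧ r.IsHomogeneous m := by
  obtain ⟨r, hrS, hr, hlap⟩ :=
    exists_lap_sumSq_mul_add_smul_eq hn hS hlapS 0 hp.lap (hlapS p hpS)
  refine ⟨p - sumSq n * r, S.sub_mem hpS (S.mul_mem hS hrS), r, hrS, (sub_add_cancel _ _).symm,
    by simpa [lap_sub, sub_eq_zero] using hlap.symm, hp.sub ?_, hr⟩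
  simpa [add_comm] using isHomogeneous_sumSq.mul hr

end Harmonic

section Generators

variable {ι σ R : Type*} [Fintype ι] [CommSemiring R] {y : ι → MvPolynomial σ R} {d : ι → ℕ}

theorem mem_span_prod_pow_of_isHomogeneous (hy : ∀ i, (y i).IsHomogeneous (d i))
    {p : MvPolynomial σ R} {m : ℕ} (hp : p.IsHomogeneous m)
    (hpy : p ∈ Algebra.adjoin R (Set.range y)) :
    p ∈ Submodule.span R ((fun α : ι →₀ ℕ => ∏ i, y i ^ α i) '' {α | ∑ i, d i * α i = m}) := by
  obtain ⟨F, rfl⟩ : ∃ F, aeval y F = p := by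
    rwa [Algebra.adjoin_range_eq_range_aeval] at hpy
  have hF : aeval y F = ∑ α ∈ F.support, coeff α F • ∏ i, y i ^ α i := by
    simp only [aeval_def, eval₂_eq', Algebra.smul_def]
  rw [← homogeneousComponent_eq_self hp, hF, map_sum]
  refine Submodule.sum_mem _ fun α _ => ?_
  rw [map_smul, homogeneousComponent_of_mem
    (IsHomogeneous.prod _ _ _ fun i _ => (hy i).pow (α i))]
  split_ifs with hα
  · exact Submodule.smul_mem _ _ (Submodule.subset_span ⟨α, hα.symm, rfl⟩)
  · rw [smul_zero]
    exact Submodule.zero_mem _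

theorem exists_eq_smul_of_isHomogeneous_of_mem_adjoin (hy : ∀ i, (y i).IsHomogeneous (d i))
    {i₀ : ι} (hpos : 0 < d i₀) (hlt : ∀ i ≠ i₀, d i₀ < d i) {p : MvPolynomial σ R}
    (hp : p.IsHomogeneous (d i₀)) (hpy : p ∈ Algebra.adjoin R (Set.range y)) :
    ∃ c : R, p = c • y i₀ := by
  classical
  have hsub : (fun α : ι →₀ ℕ => ∏ i, y i ^ α i) '' {α | ∑ i, d i * α i = d i₀} ⊆ {y i₀} := by
    rintro _ ⟨α, hα, rfl⟩
    have hα : ∑ i, d i * α i = d i₀ := hα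
    have hα0 : ∀ i ≠ i₀, α i = 0 := fun i hi => by
      by_contra h
      have := Finset.single_le_sum (fun j _ => Nat.zero_le (d j * α j)) (Finset.mem_univ i)
      nlinarith [hlt i hi, Nat.pos_of_ne_zero h]
    have hα1 : α i₀ = 1 := by
      rw [Finset.sum_eq_single i₀ (fun i _ hi => by rw [hα0 i hi, mul_zero]) (by simp)] at hα
      exact (Nat.mul_eq_left hpos.ne').1 hα
    change ∏ i, y i ^ α i = y i₀
    rw [Finset.prod_eq_single i₀ (fun i _ hi => by rw [hα0 i hi, pow_zero]) (by simp), hα1,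
      pow_one]
  obtain ⟨c, hc⟩ := Submodule.mem_span_singleton.1
    (Submodule.span_mono hsub (mem_span_prod_pow_of_isHomogeneous hy hp hpy))
  exact ⟨c, hc.symm⟩

theorem adjoin_range_le_of_forall_eq_add_mul (hy : ∀ i, (y i).IsHomogeneous (d i))
    {T : Subalgebra R (MvPolynomial σ R)} {q : MvPolynomial σ R} (hq : q ∈ T)
    (hdecomp : ∀ i, ∃ Y ∈ T, ∃ r ∈ Algebra.adjoin R (Set.range y), ∃ e < d i,
      r.IsHomogeneous e ∧ y i = Y + q * r) :
    Algebra.adjoin R (Set.range y) ≤ T := by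
  suffices ∀ k i, d i = k → y i ∈ T from
    Algebra.adjoin_le (Set.range_subset_iff.2 fun i => this _ i rfl)
  intro k
  induction k using Nat.strong_induction_on with
  | _ k ih =>
  rintro i rfl
  obtain ⟨Y, hY, r, hr, e, he, hre, hyi⟩ := hdecomp i
  rw [hyi]
  refine T.add_mem hY (T.mul_mem hq ?_)
  refine (Submodule.span_le (p := Subalgebra.toSubmodule T)).2 ?_
    (mem_span_prod_pow_of_isHomogeneous hy hre hr)
  rintro _ ⟨α, hα, rfl⟩
  have hα : ∑ i, d i * α i = e := hα
  refine T.prod_mem fun j _ => ?_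
  rcases eq_or_ne (α j) 0 with h0 | h0
  · simp [h0]
  · refine T.pow_mem (ih (d j) ?_ j rfl) _
    have := Finset.single_le_sum (fun j _ => Nat.zero_le (d j * α j)) (Finset.mem_univ j)
    nlinarith [Nat.pos_of_ne_zero h0]

end Generators

section HarmonicGenerators

variable {n : ℕ} {ι : Type*} [Fintype ι] [DecidableEq ι]

theorem exists_harmonic_generators (hn : n ≠ 0) {y : ι → MvPolynomial (Fin n) ℂ} {d : ι → ℕ}
    (hy : ∀ i, (y i).IsHomogeneous (d i)) {i₀ : ι} (hd₀ : d i₀ = 2) (hlt : ∀ i ≠ i₀, 2 < d i)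
    (hq : sumSq n ∈ Algebra.adjoin ℂ (Set.range y))
    (hlap : ∀ p ∈ Algebra.adjoin ℂ (Set.range y), lap p ∈ Algebra.adjoin ℂ (Set.range y)) :
    ∃ Y : ι → MvPolynomial (Fin n) ℂ, (∀ i, (Y i).IsHomogeneous (d i)) ∧
      Algebra.adjoin ℂ (Set.range Y) = Algebra.adjoin ℂ (Set.range y) ∧
      lap (Y i₀) = 1 ∧ ∀ i ≠ i₀, lap (Y i) = 0 := by
  set S := Algebra.adjoin ℂ (Set.range y)
  have hd (i : ι) : d i = d i - 2 + 2 := by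
    rcases eq_or_ne i i₀ with rfl | hi
    · rw [hd₀]
    · have := hlt i hi
      omega
  have h2n : (2 * n : ℂ) ≠ 0 := by
    norm_cast
    omega
  obtain ⟨c, hc⟩ := exists_eq_smul_of_isHomogeneous_of_mem_adjoin hy (by rw [hd₀]; norm_num)
    (fun i hi => hd₀ ▸ hlt i hi) (hd₀ ▸ isHomogeneous_sumSq) hq
  have hc0 : c ≠ 0 := by
    rintro rfl
    exact sumSq_ne_zero hn (by simpa using hc)
  choose h hhS r hrS hyhr hlaph hh hr using fun i =>
    exists_harmonic_decomposition hn hq hlap (hd i ▸ hy i)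
      (Algebra.subset_adjoin (Set.mem_range_self i))
  set Y := Function.update h i₀ ((2 * n : ℂ)⁻¹ • sumSq n)
  have hY₀ : Y i₀ = (2 * n : ℂ)⁻¹ • sumSq n := Function.update_self _ _ _
  have hY {i : ι} (hi : i ≠ i₀) : Y i = h i := Function.update_of_ne hi _ _
  have hqY : sumSq n ∈ Algebra.adjoin ℂ (Set.range Y) := by
    rw [← inv_smul_smul₀ (inv_ne_zero h2n) (sumSq n), ← hY₀]
    exact Subalgebra.smul_mem _ (Algebra.subset_adjoin (Set.mem_range_self i₀)) _
  have hYS : Algebra.adjoin ℂ (Set.range Y) ≤ S := by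
    refine Algebra.adjoin_le (Set.range_subset_iff.2 fun i => ?_)
    rcases eq_or_ne i i₀ with rfl | hi
    · exact hY₀ ▸ S.smul_mem hq _
    · exact hY hi ▸ hhS i
  have hSY : S ≤ Algebra.adjoin ℂ (Set.range Y) := by
    refine adjoin_range_le_of_forall_eq_add_mul hy hqY fun i => ?_
    rcases eq_or_ne i i₀ with rfl | hi
    · refine ⟨c⁻¹ • sumSq n, Subalgebra.smul_mem _ hqY _, 0, S.zero_mem, 0, by omega,
        isHomogeneous_zero _ _ _, ?_⟩
      rw [hc, inv_smul_smul₀ hc0, mul_zero, add_zero]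
    · exact ⟨h i, hY hi ▸ Algebra.subset_adjoin (Set.mem_range_self i), r i, hrS i, d i - 2,
        by have := hd i; omega, hr i, hyhr i⟩
  refine ⟨Y, fun i => ?_, le_antisymm hYS hSY, ?_, fun i hi => hY hi ▸ hlaph i⟩
  · rcases eq_or_ne i i₀ with rfl | hi
    · rw [hY₀, hd₀, smul_eq_C_mul]
      exact isHomogeneous_sumSq.C_mul _
    · rw [hY hi, hd i]
      exact hh i
  · rw [hY₀, lap_smul, lap_sumSq, smul_eq_C_mul, ← C_mul, inv_mul_cancel₀ h2n, C_1]

end HarmonicGenerators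

/-- If the invariant algebra of a finite group `W` of complex orthogonal matrices is generated
by homogeneous invariants `y₁, …, yₙ` of degrees `d₁ ≥ … ≥ d_{n-1} > dₙ = 2`, then there is a
set of homogeneous generators `Y₁, …, Yₙ` of the same degrees with `Δ(Yₙ) = 1` and `Δ(Yⱼ) = 0`
for `j = 1, …, n-1`. -/
theorem statement_1 (n : ℕ) (hn : 1 ≤ n) (W : Set (Matrix (Fin n) (Fin n) ℂ))
    (horth : ∀ A ∈ W, Aᵀ * A = 1)
    (y : Fin n → MvPolynomial (Fin n) ℂ) (d : Fin n → ℕ)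
    (hyhom : ∀ i, (y i).IsHomogeneous (d i))
    (hlast : d ⟨n - 1, by omega⟩ = 2)
    (hgt : ∀ i : Fin n, (i : ℕ) < n - 1 → 2 < d i)
    (hgen : ∀ p : MvPolynomial (Fin n) ℂ,
      p ∈ Algebra.adjoin ℂ (Set.range y) ↔ ∀ A ∈ W, matAct A p = p) :
    ∃ Y : Fin n → MvPolynomial (Fin n) ℂ,
      (∀ i, (Y i).IsHomogeneous (d i)) ∧
      (∀ i, ∀ A ∈ W, matAct A (Y i) = Y i) ∧
      (∀ p : MvPolynomial (Fin n) ℂ,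
        p ∈ Algebra.adjoin ℂ (Set.range Y) ↔ ∀ A ∈ W, matAct A p = p) ∧
      lap (Y ⟨n - 1, by omega⟩) = 1 ∧
      (∀ i : Fin n, (i : ℕ) < n - 1 → lap (Y i) = 0) := by
  set last : Fin n := ⟨n - 1, by omega⟩
  have hne_last (i : Fin n) : i ≠ last ↔ (i : ℕ) < n - 1 := by
    rw [Ne, Fin.ext_iff, show (last : ℕ) = n - 1 from rfl]
    omega
  have hyW : Algebra.adjoin ℂ (Set.range y) = invariants W :=
    SetLike.ext fun p => (hgen p).trans mem_invariants.symm
  obtain ⟨Y, hYhom, hYy, hlapY₀, hlapY⟩ := exists_harmonic_generators (by omega) hyhom hlast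
    (fun i hi => hgt i ((hne_last i).1 hi)) (hyW ▸ sumSq_mem_invariants horth)
    (hyW ▸ fun _ => lap_mem_invariants horth)
  have hYW : Algebra.adjoin ℂ (Set.range Y) = invariants W := hYy.trans hyW
  exact ⟨Y, hYhom, fun i => mem_invariants.1 (hYW ▸ Algebra.subset_adjoin (Set.mem_range_self i)),
    fun p => by rw [hYW, mem_invariants], hlapY₀, fun i hi => hlapY i ((hne_last i).2 hi)⟩
end
end

section
/- Let y₁, y₂, y₃ ∈ ℂ[x₁,x₂,x₃] be the H₃ basic invariants. Then the symmetric 3×3 matrix with entries g^{ij} := ∑_{a=1}^{3} (∂yᵢ/∂xₐ)(∂yⱼ/∂xₐ) satisfies, as identities of polynomials in ℂ[x₁,x₂,x₃]: g^{11} = 30y₂³ + 36y₂²y₃³ + 8y₁y₃⁴, g^{12} = 28y₂²y₃ + 8y₂y₃⁴, g^{13} = 20y₁, g^{22} = 8y₁ + 8y₂y₃², g^{23} = 12y₂, g^{33} = 4y₃. -/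
open MvPolynomial

noncomputable section

def ε₁ : MvPolynomial (Fin 3) ℂ := X 0 ^ 2 + X 1 ^ 2 + X 2 ^ 2
def ε₂ : MvPolynomial (Fin 3) ℂ :=
  X 0 ^ 2 * X 1 ^ 2 + X 0 ^ 2 * X 2 ^ 2 + X 1 ^ 2 * X 2 ^ 2
def ε₃ : MvPolynomial (Fin 3) ℂ := X 0 ^ 2 * X 1 ^ 2 * X 2 ^ 2
def δH3 : MvPolynomial (Fin 3) ℂ :=
  (X 0 ^ 2 - X 1 ^ 2) * (X 0 ^ 2 - X 2 ^ 2) * (X 1 ^ 2 - X 2 ^ 2)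

/-- The `H₃` basic invariant of degree 10. -/
def y₁H3 (ζ : ℂ) : MvPolynomial (Fin 3) ℂ :=
  95 * ε₂ * ε₃ - 32 * ε₁ ^ 2 * ε₃ - 5 * ε₁ * ε₂ ^ 2 + 2 * ε₁ ^ 3 * ε₂ + 3 * C ζ * δH3 * ε₂

/-- The `H₃` basic invariant of degree 6. -/
def y₂H3 (ζ : ℂ) : MvPolynomial (Fin 3) ℂ := C ζ * δH3 + ε₁ * ε₂ - 11 * ε₃

/-- The `H₃` basic invariant of degree 2. -/
def y₃H3 : MvPolynomial (Fin 3) ℂ := ε₁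

/-!
For each `p`, `q ↦ ∑ₐ ∂ₐp ∂ₐq` is a derivation, so the pairing is a symmetric biderivation,
determined by its values on generators. Each `yᵢ` is a polynomial in `ε₁, ε₂, ε₃` and `w = ζδ`,
and the pairings of these four generators are again polynomials in them (for instance
`(∇ε₃, ∇δ) = 0`). The Leibniz rule thus turns each identity for `g^{ij}` into one between
polynomials in `ε₁, ε₂, ε₃, w`, which holds modulo the single relation `w² = 5δ²`, where `δ²` is
the discriminant of the cubic with roots `x₁², x₂², x₃²`.
-/

section GradPairing

variable {σ R : Type*} [Fintype σ] [CommRing R]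

def gradPairing (p q : MvPolynomial σ R) : MvPolynomial σ R :=
  ∑ a, pderiv a p * pderiv a q

theorem gradPairing_comm (p q : MvPolynomial σ R) : gradPairing p q = gradPairing q p := by
  simp only [gradPairing, mul_comm]

def gradDerivation (p : MvPolynomial σ R) : Derivation R (MvPolynomial σ R) (MvPolynomial σ R) :=
  ∑ a, pderiv a p • pderiv a

theorem gradDerivation_apply (p q : MvPolynomial σ R) : gradDerivation p q = gradPairing p q := by
  rw [gradDerivation, ← Derivation.coeFnAddMonoidHom_apply, map_sum, Finset.sum_apply]
  rfl

theorem gradPairing_mul_right (p q r : MvPolynomial σ R) :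
    gradPairing p (q * r) = q * gradPairing p r + r * gradPairing p q := by
  simp only [← gradDerivation_apply, Derivation.leibniz, smul_eq_mul]

theorem gradPairing_pow_right (p q : MvPolynomial σ R) (n : ℕ) :
    gradPairing p (q ^ (n + 1)) = (n + 1) * q ^ n * gradPairing p q := by
  simp only [← gradDerivation_apply, Derivation.leibniz_pow, nsmul_eq_mul, smul_eq_mul]
  push_cast; ring

theorem gradPairing_C_right (p : MvPolynomial σ R) (c : R) : gradPairing p (C c) = 0 := by
  rw [← gradDerivation_apply, ← algebraMap_eq, Derivation.map_algebraMap]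

theorem gradPairing_ofNat_right (p : MvPolynomial σ R) (n : ℕ) [n.AtLeastTwo] :
    gradPairing p ofNat(n) = 0 := by
  rw [← gradDerivation_apply, ← Nat.cast_ofNat, Derivation.map_natCast]

theorem gradPairing_add_right (p q r : MvPolynomial σ R) :
    gradPairing p (q + r) = gradPairing p q + gradPairing p r := by
  simp only [← gradDerivation_apply, map_add]

theorem gradPairing_sub_right (p q r : MvPolynomial σ R) :
    gradPairing p (q - r) = gradPairing p q - gradPairing p r := by
  simp only [← gradDerivation_apply, map_sub]

theorem gradPairing_add_left (p q r : MvPolynomial σ R) :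
    gradPairing (p + q) r = gradPairing p r + gradPairing q r := by
  simp only [gradPairing_comm _ r, gradPairing_add_right]

theorem gradPairing_sub_left (p q r : MvPolynomial σ R) :
    gradPairing (p - q) r = gradPairing p r - gradPairing q r := by
  simp only [gradPairing_comm _ r, gradPairing_sub_right]

theorem gradPairing_mul_left (p q r : MvPolynomial σ R) :
    gradPairing (p * q) r = p * gradPairing q r + q * gradPairing p r := by
  simp only [gradPairing_comm _ r, gradPairing_mul_right]

theorem gradPairing_pow_left (p q : MvPolynomial σ R) (n : ℕ) :
    gradPairing (p ^ (n + 1)) q = (n + 1) * p ^ n * gradPairing p q := by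
  simp only [gradPairing_comm _ q, gradPairing_pow_right]

theorem gradPairing_C_left (c : R) (p : MvPolynomial σ R) : gradPairing (C c) p = 0 := by
  rw [gradPairing_comm, gradPairing_C_right]

theorem gradPairing_ofNat_left (n : ℕ) [n.AtLeastTwo] (p : MvPolynomial σ R) :
    gradPairing ofNat(n) p = 0 := by
  rw [gradPairing_comm, gradPairing_ofNat_right]

end GradPairing

theorem gradPairing_ε₁_ε₁ : gradPairing ε₁ ε₁ = 4 * ε₁ := by
  simp only [gradPairing, Fin.sum_univ_three, ε₁, map_add, Derivation.leibniz_pow, pderiv_X,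
    Pi.single_apply, Fin.reduceEq, ↓reduceIte, smul_eq_mul, nsmul_eq_mul]
  ring

theorem gradPairing_ε₁_ε₂ : gradPairing ε₁ ε₂ = 8 * ε₂ := by
  simp only [gradPairing, Fin.sum_univ_three, ε₁, ε₂, map_add, Derivation.leibniz,
    Derivation.leibniz_pow, pderiv_X, Pi.single_apply, Fin.reduceEq, ↓reduceIte, smul_eq_mul,
    nsmul_eq_mul]
  ring

theorem gradPairing_ε₁_ε₃ : gradPairing ε₁ ε₃ = 12 * ε₃ := by
  simp only [gradPairing, Fin.sum_univ_three, ε₁, ε₃, map_add, Derivation.leibniz,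
    Derivation.leibniz_pow, pderiv_X, Pi.single_apply, Fin.reduceEq, ↓reduceIte, smul_eq_mul,
    nsmul_eq_mul]
  ring

theorem gradPairing_ε₂_ε₂ : gradPairing ε₂ ε₂ = 4 * (ε₁ * ε₂ + 3 * ε₃) := by
  simp only [gradPairing, Fin.sum_univ_three, ε₁, ε₂, ε₃, map_add, Derivation.leibniz,
    Derivation.leibniz_pow, pderiv_X, Pi.single_apply, Fin.reduceEq, ↓reduceIte, smul_eq_mul,
    nsmul_eq_mul]
  ring

theorem gradPairing_ε₂_ε₃ : gradPairing ε₂ ε₃ = 8 * ε₁ * ε₃ := by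
  simp only [gradPairing, Fin.sum_univ_three, ε₁, ε₂, ε₃, map_add, Derivation.leibniz,
    Derivation.leibniz_pow, pderiv_X, Pi.single_apply, Fin.reduceEq, ↓reduceIte, smul_eq_mul,
    nsmul_eq_mul]
  ring

theorem gradPairing_ε₃_ε₃ : gradPairing ε₃ ε₃ = 4 * ε₂ * ε₃ := by
  simp only [gradPairing, Fin.sum_univ_three, ε₂, ε₃, Derivation.leibniz, Derivation.leibniz_pow,
    pderiv_X, Pi.single_apply, Fin.reduceEq, ↓reduceIte, smul_eq_mul, nsmul_eq_mul]
  ring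

theorem gradPairing_ε₁_δH3 : gradPairing ε₁ δH3 = 12 * δH3 := by
  simp only [gradPairing, Fin.sum_univ_three, ε₁, δH3, map_add, map_sub, Derivation.leibniz,
    Derivation.leibniz_pow, pderiv_X, Pi.single_apply, Fin.reduceEq, ↓reduceIte, smul_eq_mul,
    nsmul_eq_mul]
  ring

theorem gradPairing_ε₂_δH3 : gradPairing ε₂ δH3 = 4 * ε₁ * δH3 := by
  simp only [gradPairing, Fin.sum_univ_three, ε₁, ε₂, δH3, map_add, map_sub, Derivation.leibniz,
    Derivation.leibniz_pow, pderiv_X, Pi.single_apply, Fin.reduceEq, ↓reduceIte, smul_eq_mul,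
    nsmul_eq_mul]
  ring

theorem gradPairing_ε₃_δH3 : gradPairing ε₃ δH3 = 0 := by
  simp only [gradPairing, Fin.sum_univ_three, ε₃, δH3, map_sub, Derivation.leibniz,
    Derivation.leibniz_pow, pderiv_X, Pi.single_apply, Fin.reduceEq, ↓reduceIte, smul_eq_mul,
    nsmul_eq_mul]
  ring

theorem gradPairing_δH3_δH3 :
    gradPairing δH3 δH3 = 4 * (ε₁ ^ 3 * ε₂ - 3 * ε₁ * ε₂ ^ 2 - 9 * ε₁ ^ 2 * ε₃ + 27 * ε₂ * ε₃) := by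
  simp only [gradPairing, Fin.sum_univ_three, ε₁, ε₂, ε₃, δH3, map_sub, Derivation.leibniz,
    Derivation.leibniz_pow, pderiv_X, Pi.single_apply, Fin.reduceEq, ↓reduceIte, smul_eq_mul,
    nsmul_eq_mul]
  ring

theorem δH3_sq :
    δH3 ^ 2 = ε₁ ^ 2 * ε₂ ^ 2 - 4 * ε₂ ^ 3 - 4 * ε₁ ^ 3 * ε₃ + 18 * ε₁ * ε₂ * ε₃ - 27 * ε₃ ^ 2 := by
  simp only [ε₁, ε₂, ε₃, δH3]; ring

def ζδH3 (ζ : ℂ) : MvPolynomial (Fin 3) ℂ := C ζ * δH3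

theorem y₁H3_eq (ζ : ℂ) : y₁H3 ζ =
    95 * ε₂ * ε₃ - 32 * ε₁ ^ 2 * ε₃ - 5 * ε₁ * ε₂ ^ 2 + 2 * ε₁ ^ 3 * ε₂ + 3 * ζδH3 ζ * ε₂ := by
  rw [y₁H3, ζδH3]; ring

theorem y₂H3_eq (ζ : ℂ) : y₂H3 ζ = ζδH3 ζ + ε₁ * ε₂ - 11 * ε₃ := rfl

theorem gradPairing_ε₁_ζδH3 (ζ : ℂ) : gradPairing ε₁ (ζδH3 ζ) = 12 * ζδH3 ζ := by
  rw [ζδH3, gradPairing_mul_right, gradPairing_C_right, gradPairing_ε₁_δH3]; ring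

theorem gradPairing_ε₂_ζδH3 (ζ : ℂ) : gradPairing ε₂ (ζδH3 ζ) = 4 * ε₁ * ζδH3 ζ := by
  rw [ζδH3, gradPairing_mul_right, gradPairing_C_right, gradPairing_ε₂_δH3]; ring

theorem gradPairing_ε₃_ζδH3 (ζ : ℂ) : gradPairing ε₃ (ζδH3 ζ) = 0 := by
  rw [ζδH3, gradPairing_mul_right, gradPairing_C_right, gradPairing_ε₃_δH3]; ring

theorem gradPairing_ζδH3_ζδH3 {ζ : ℂ} (hζ : ζ ^ 2 = 5) : gradPairing (ζδH3 ζ) (ζδH3 ζ) =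
    20 * (ε₁ ^ 3 * ε₂ - 3 * ε₁ * ε₂ ^ 2 - 9 * ε₁ ^ 2 * ε₃ + 27 * ε₂ * ε₃) := by
  have hC : C ζ ^ 2 = (5 : MvPolynomial (Fin 3) ℂ) := by rw [← map_pow, hζ, map_ofNat]
  simp only [ζδH3, gradPairing_mul_left, gradPairing_mul_right, gradPairing_C_left,
    gradPairing_C_right, gradPairing_δH3_δH3]
  linear_combination (4 * (ε₁ ^ 3 * ε₂ - 3 * ε₁ * ε₂ ^ 2 - 9 * ε₁ ^ 2 * ε₃ + 27 * ε₂ * ε₃)) * hC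

theorem ζδH3_sq {ζ : ℂ} (hζ : ζ ^ 2 = 5) : ζδH3 ζ ^ 2 =
    5 * (ε₁ ^ 2 * ε₂ ^ 2 - 4 * ε₂ ^ 3 - 4 * ε₁ ^ 3 * ε₃ + 18 * ε₁ * ε₂ * ε₃ - 27 * ε₃ ^ 2) := by
  rw [ζδH3, mul_pow, ← map_pow, hζ, δH3_sq, map_ofNat]

/-- The intersection form `g^{ij} = (∇yᵢ, ∇yⱼ)` of `H₃` in the basic invariants. -/
theorem statement_2 (ζ : ℂ) (hζ : ζ ^ 2 = 5) :
    (∑ a, pderiv a (y₁H3 ζ) * pderiv a (y₁H3 ζ))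
      = 30 * (y₂H3 ζ) ^ 3 + 36 * (y₂H3 ζ) ^ 2 * y₃H3 ^ 3 + 8 * (y₁H3 ζ) * y₃H3 ^ 4 ∧
    (∑ a, pderiv a (y₁H3 ζ) * pderiv a (y₂H3 ζ))
      = 28 * (y₂H3 ζ) ^ 2 * y₃H3 + 8 * (y₂H3 ζ) * y₃H3 ^ 4 ∧
    (∑ a, pderiv a (y₁H3 ζ) * pderiv a y₃H3) = 20 * (y₁H3 ζ) ∧
    (∑ a, pderiv a (y₂H3 ζ) * pderiv a (y₂H3 ζ)) = 8 * (y₁H3 ζ) + 8 * (y₂H3 ζ) * y₃H3 ^ 2 ∧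
    (∑ a, pderiv a (y₂H3 ζ) * pderiv a y₃H3) = 12 * (y₂H3 ζ) ∧
    (∑ a, pderiv a y₃H3 * pderiv a y₃H3) = 4 * y₃H3 := by
  have hw := ζδH3_sq hζ
  refine ⟨?_, ?_, ?_, ?_, ?_, ?_⟩ <;> change gradPairing _ _ = _ <;>
    simp only [y₁H3_eq, y₂H3_eq, y₃H3, gradPairing_add_left, gradPairing_add_right,
      gradPairing_sub_left, gradPairing_sub_right, gradPairing_mul_left, gradPairing_mul_right,
      gradPairing_pow_left, gradPairing_pow_right, gradPairing_ofNat_left, gradPairing_ofNat_right,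
      gradPairing_comm ε₂ ε₁, gradPairing_comm ε₃ ε₁, gradPairing_comm ε₃ ε₂,
      gradPairing_comm (ζδH3 ζ) ε₁, gradPairing_comm (ζδH3 ζ) ε₂, gradPairing_comm (ζδH3 ζ) ε₃,
      gradPairing_ε₁_ε₁, gradPairing_ε₁_ε₂, gradPairing_ε₁_ε₃, gradPairing_ε₂_ε₂,
      gradPairing_ε₂_ε₃, gradPairing_ε₃_ε₃, gradPairing_ε₁_ζδH3, gradPairing_ε₂_ζδH3,
      gradPairing_ε₃_ζδH3, gradPairing_ζδH3_ζδH3 hζ]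
  · linear_combination (1098 * ε₃ + 18 * ε₁ * ε₂ - 36 * ε₁ ^ 3 - 30 * ζδH3 ζ) * hw
  · linear_combination (-16 * ε₁) * hw
  all_goals ring
end
end
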